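/- Let c ≥ 0 and let z be a real number with 0 ≤ z ≤ c. Then z · s(c)·(1 − s(c)) ≤ s(z) − 1/2. -/

import Mathlib

noncomputable def sigmoid (z : ℝ) : ℝ := 1 / (1 + Real.exp (-z))

/-!
The derivative `s (1 - s)` of the sigmoid decreases on `[0, ∞)`, since `s` increases there from
`s 0 = 1/2` and `t ↦ t (1 - t)` decreases on `[1/2, ∞)`. Hence on `[0, z]` it stays above its value
at `c ≥ z`, and the mean value theorem gives `s z - s 0 ≥ z · s' c`.
-/

open Set

theorem sigmoid_eq_real_sigmoid : sigmoid = Real.sigmoid := by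
  funext z
  rw [sigmoid, Real.sigmoid_def, one_div]

namespace Real

theorem antitoneOn_deriv_sigmoid : AntitoneOn (deriv sigmoid) (Ici 0) := by
  intro a ha b _ hab
  have half_le : 2⁻¹ ≤ sigmoid a := sigmoid_zero ▸ sigmoid_le ha
  have hab' : sigmoid a ≤ sigmoid b := sigmoid_le hab
  rw [deriv_sigmoid]
  nlinarith

theorem mul_deriv_sigmoid_le_sigmoid_sub_half {c z : ℝ} (hz0 : 0 ≤ z) (hzc : z ≤ c) :
    z * deriv sigmoid c ≤ sigmoid z - 2⁻¹ := by
  have hc : c ∈ Ici (0 : ℝ) := hz0.trans hzc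
  have hderiv_ge : ∀ x ∈ interior (Icc 0 c), deriv sigmoid c ≤ deriv sigmoid x := fun x hx =>
    let hx := interior_subset hx
    antitoneOn_deriv_sigmoid hx.1 hc hx.2
  have hmvt := (convex_Icc 0 c).mul_sub_le_image_sub_of_le_deriv continuous_sigmoid.continuousOn
    differentiable_sigmoid.differentiableOn hderiv_ge 0 ⟨le_rfl, hc⟩ z ⟨hz0, hzc⟩ hz0
  rwa [sub_zero, sigmoid_zero, mul_comm] at hmvt

end Real

theorem mul_deriv_le_sigmoid_sub_half_general (c z : ℝ) (hz0 : 0 ≤ z) (hzc : z ≤ c) :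
    z * (sigmoid c * (1 - sigmoid c)) ≤ sigmoid z - 1 / 2 := by
  have := Real.mul_deriv_sigmoid_le_sigmoid_sub_half hz0 hzc
  rwa [Real.deriv_sigmoid, ← sigmoid_eq_real_sigmoid, ← one_div] at this

theorem mul_deriv_le_sigmoid_sub_half (c z : ℝ) (hc : 0 ≤ c) (hz0 : 0 ≤ z) (hzc : z ≤ c) :
    z * (sigmoid c * (1 - sigmoid c)) ≤ sigmoid z - 1 / 2 :=
  mul_deriv_le_sigmoid_sub_half_general c z hz0 hzc
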